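/- arXiv:1409.4227 — 5 statements merged into one kernel-verified Lean document; each statement's English description precedes it below -/
import Mathlib

section
/- Let π be an involution of S_n and let M_π be its associated matching. Then L(π) = L(M_π), where L(π) = (ℓ(π)+k)/2 with ℓ(π) the number of inversions of π and k the number of 2-cycles of π, and L(M_π) is the sum over all strands {i<j} of M_π of (j−i), minus the number of crossing pairs of strands. -/
/-- The number of inversions (Coxeter length) of a permutation of `Fin n`. -/
def invNum {n : ℕ} (w : Equiv.Perm (Fin n)) : ℕ :=
  (Finset.univ.filter fun p : Fin n × Fin n => p.1 < p.2 ∧ w p.2 < w p.1).card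

/-- The number of 2-cycles of an involution. -/
def numTwoCycles {n : ℕ} (π : Equiv.Perm (Fin n)) : ℕ :=
  (Finset.univ.filter fun i : Fin n => π i ≠ i).card / 2

/-- The sum of the lengths `j - i` of the strands `{i < j}` of the matching `M_π`
(each strand recorded at its left endpoint). -/
def strandSum {n : ℕ} (π : Equiv.Perm (Fin n)) : ℕ :=
  ∑ i : Fin n, if i < π i then (π i : ℕ) - (i : ℕ) else 0

/-- The number of crossing pairs of strands of `M_π`: unordered pairs of strands
`{i < j}`, `{k < l}` with `i < k < j < l` (recorded via left endpoints `i < k`). -/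
def numCrossings {n : ℕ} (π : Equiv.Perm (Fin n)) : ℕ :=
  (Finset.univ.filter fun p : Fin n × Fin n =>
    p.1 < π p.1 ∧ p.2 < π p.2 ∧ p.1 < p.2 ∧ p.2 < π p.1 ∧ π p.1 < π p.2).card

/-!
Give each ordered pair `(a, b)` the weight
`[a < b, π b < π a] + [a < b = π a] + 2·[a < b < π a < π b] - 2·[a < b ≤ π a]`.
Summed over all pairs this is `ℓ(π) + k + 2·(crossings) - 2·∑ (j - i)`, since the strand
`{i < j}` has exactly `j - i` points `b` with `i < b ≤ j`. The map `(a, b) ↦ (π b, π a)` is an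
involution on ordered pairs under which the weight is antisymmetric (a finite check on the
relative order of `a`, `b`, `π a`, `π b`), so the total weight is zero.
-/

open Finset

section LinearOrder

variable {α : Type*} [LinearOrder α]

def pairWeight (π : α → α) (a b : α) : ℤ :=
  (if a < b ∧ π b < π a then 1 else 0) + (if a < b ∧ b = π a then 1 else 0)
    + 2 * (if a < π a ∧ b < π b ∧ a < b ∧ b < π a ∧ π a < π b then 1 else 0)
    - 2 * (if a < b ∧ b ≤ π a then 1 else 0)

theorem pairWeight_add_pairWeight {π : α → α} (hπ : Function.Involutive π) (a b : α) :
    pairWeight π a b + pairWeight π (π b) (π a) = 0 := by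
  have hab : a = b ↔ π a = π b := hπ.injective.eq_iff.symm
  have hba : b = π a ↔ a = π b := eq_comm.trans hπ.eq_iff
  unfold pairWeight
  rw [hπ, hπ]
  grind

variable [Fintype α]

theorem sum_pairWeight_eq_zero {π : α → α} (hπ : Function.Involutive π) :
    ∑ p : α × α, pairWeight π p.1 p.2 = 0 := by
  refine sum_ninvolution (fun p => (π p.2, π p.1)) (fun p => pairWeight_add_pairWeight hπ _ _)
    (fun p hp hfix => hp ?_) (fun _ => mem_univ _) (fun p => by simp [hπ _])
  have hanti := pairWeight_add_pairWeight hπ p.1 p.2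
  obtain ⟨h₂, h₁⟩ : π p.2 = p.1 ∧ π p.1 = p.2 := Prod.ext_iff.mp hfix
  rw [h₂, h₁] at hanti
  omega

theorem card_filter_lt_eq_apply (f : α → α) :
    #{p : α × α | p.1 < p.2 ∧ p.2 = f p.1} = #{a | a < f a} := by
  refine card_nbij' Prod.fst (fun a => (a, f a)) ?_ (fun a ha => by simpa using ha) ?_
    (fun _ _ => rfl)
  all_goals
    rintro ⟨a, b⟩ h
    obtain ⟨hab, rfl⟩ : a < b ∧ b = f a := by simpa using h
  · simpa using hab
  · rfl

theorem card_filter_lt_le_apply [LocallyFiniteOrder α] (f : α → α) :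
    #{p : α × α | p.1 < p.2 ∧ p.2 ≤ f p.1} = ∑ a, #(Ioc a (f a)) := by
  rw [card_filter, Fintype.sum_prod_type]
  refine sum_congr rfl fun a _ => ?_
  rw [← card_filter]
  congr 1
  ext b
  simp

end LinearOrder

theorem strandSum_eq_sum_sub {n : ℕ} (π : Equiv.Perm (Fin n)) :
    strandSum π = ∑ i, ((π i : ℕ) - i) := by
  refine sum_congr rfl fun i _ => ?_
  split_ifs with h
  · rfl
  · rw [not_lt, Fin.le_def] at h
    omega

theorem numTwoCycles_eq_card_lt {n : ℕ} {π : Equiv.Perm (Fin n)} (hπ : Function.Involutive π) :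
    numTwoCycles π = #{i | i < π i} := by
  have hsplit : #{i | π i ≠ i} = #{i | i < π i} + #{i | π i < i} := by
    rw [← card_union_of_disjoint (disjoint_filter.2 fun i _ h => lt_asymm h), ← filter_or]
    congr 1
    ext i
    simp [lt_or_lt_iff_ne, ne_comm]
  have hswap : #{i | π i < i} = #{i | i < π i} := by
    rw [card_filter, card_filter, ← Equiv.sum_comp π]
    simp [hπ _]
  rw [numTwoCycles, hsplit, hswap]
  omega

theorem sum_pairWeight_eq {n : ℕ} (π : Equiv.Perm (Fin n)) :
    ∑ p : Fin n × Fin n, pairWeight π p.1 p.2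
      = invNum π + #{i | i < π i} + 2 * numCrossings π - 2 * strandSum π := by
  simp only [pairWeight, sum_add_distrib, sum_sub_distrib, ← mul_sum, sum_boole]
  rw [card_filter_lt_eq_apply, card_filter_lt_le_apply, strandSum_eq_sum_sub]
  simp only [Fin.card_Ioc]
  rfl

/-- `L(π) = L(M_π)`: with `L(π) = (ℓ(π)+k)/2` and `L(M_π) = strandSum - numCrossings`,
equivalently (clearing the division and the subtraction)
`ℓ(π) + k + 2·(number of crossings) = 2·(sum of strand lengths)`. -/
theorem stmt2 (n : ℕ) (π : Equiv.Perm (Fin n)) (hπ : π * π = 1) :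
    invNum π + numTwoCycles π + 2 * numCrossings π = 2 * strandSum π := by
  have hinv : Function.Involutive π := fun i => by simpa using DFunLike.congr_fun hπ i
  have hsum := sum_pairWeight_eq π
  rw [sum_pairWeight_eq_zero hinv] at hsum
  rw [numTwoCycles_eq_card_lt hinv]
  omega
end

section
/- For any involution π of S_n and any simple transposition s_i, if ℓ(s_i π s_i) = ℓ(π) + 2, then s_i π s_i is an involution with the same number of 2-cycles as π and L(s_i π s_i) = L(π) + 1, where L(σ) = (ℓ(σ)+k(σ))/2 and k(σ) is the number of 2-cycles of the involution σ. -/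
/-- The simple transposition `s_i = (i, i+1)` (0-indexed) in `S_n`, or `1` if out of range. -/
def sNat (n i : ℕ) : Equiv.Perm (Fin n) :=
  if h : i + 1 < n then Equiv.swap ⟨i, Nat.lt_of_succ_lt h⟩ ⟨i + 1, h⟩ else 1

lemma sNat_inv (n i : ℕ) : (sNat n i)⁻¹ = sNat n i := by
  unfold sNat
  split <;> simp

lemma conj_mul_conj_eq_one {G : Type*} [Group G] (g a : G) (ha : a * a = 1) :
    (g * a * g⁻¹) * (g * a * g⁻¹) = 1 := by
  calc (g * a * g⁻¹) * (g * a * g⁻¹) = g * (a * a) * g⁻¹ := by group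
    _ = 1 := by rw [ha, mul_one, mul_inv_cancel]

lemma numTwoCycles_eq_card_support {n : ℕ} (π : Equiv.Perm (Fin n)) :
    numTwoCycles π = π.support.card / 2 := rfl

lemma numTwoCycles_conj {n : ℕ} (σ π : Equiv.Perm (Fin n)) :
    numTwoCycles (σ * π * σ⁻¹) = numTwoCycles π := by
  rw [numTwoCycles_eq_card_support, numTwoCycles_eq_card_support, Equiv.Perm.card_support_conj]

theorem stmt3_general (n i : ℕ) (π : Equiv.Perm (Fin n)) (hπ : π * π = 1)
    (h : invNum (sNat n i * π * sNat n i) = invNum π + 2) :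
    (sNat n i * π * sNat n i) * (sNat n i * π * sNat n i) = 1 ∧
    numTwoCycles (sNat n i * π * sNat n i) = numTwoCycles π ∧
    (invNum (sNat n i * π * sNat n i) + numTwoCycles (sNat n i * π * sNat n i)) / 2 =
      (invNum π + numTwoCycles π) / 2 + 1 := by
  have hconj : sNat n i * π * sNat n i = sNat n i * π * (sNat n i)⁻¹ := by rw [sNat_inv]
  have hk : numTwoCycles (sNat n i * π * sNat n i) = numTwoCycles π := by
    rw [hconj, numTwoCycles_conj]
  refine ⟨hconj ▸ conj_mul_conj_eq_one _ _ hπ, hk, ?_⟩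
  rw [hk, h]
  omega

/-- If `π` is an involution of `S_n` and `ℓ(s_i π s_i) = ℓ(π) + 2`, then `s_i π s_i` is an
involution with the same number of 2-cycles as `π`, and `L(s_i π s_i) = L(π) + 1`, where
`L(σ) = (ℓ(σ) + k(σ))/2`. -/
theorem stmt3 (n i : ℕ) (hi : i + 1 < n) (π : Equiv.Perm (Fin n)) (hπ : π * π = 1)
    (h : invNum (sNat n i * π * sNat n i) = invNum π + 2) :
    (sNat n i * π * sNat n i) * (sNat n i * π * sNat n i) = 1 ∧
    numTwoCycles (sNat n i * π * sNat n i) = numTwoCycles π ∧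
    (invNum (sNat n i * π * sNat n i) + numTwoCycles (sNat n i * π * sNat n i)) / 2 =
      (invNum π + numTwoCycles π) / 2 + 1 :=
  stmt3_general n i π hπ h
end

section
/- With the Richardson–Springer action m(s_i)·π (defined by: s_i π s_i if ℓ(s_i π s_i)=ℓ(π)+2; s_i π if π fixes both i and i+1; π otherwise), for every involution π of S_n and every i, m(s_i)·π is again an involution and L(m(s_i)·π) ∈ {L(π), L(π)+1}, where L(σ) = (ℓ(σ) + number of 2-cycles of σ)/2. -/
/-- The Richardson–Springer monoid action of `m(s_i)` on involutions:
`s_i π s_i` if `ℓ(s_i π s_i) = ℓ(π) + 2`; `s_i π` if `π` fixes both `i` and `i+1`;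
and `π` otherwise. -/
def RS (n i : ℕ) (π : Equiv.Perm (Fin n)) : Equiv.Perm (Fin n) :=
  if invNum (sNat n i * π * sNat n i) = invNum π + 2 then sNat n i * π * sNat n i
  else if ∀ x : Fin n, ((x : ℕ) = i ∨ (x : ℕ) = i + 1) → π x = x then sNat n i * π
  else π

/-!
Write `s = s_i = (a b)` with `b = a + 1`. If `ℓ(sπs) = ℓ(π) + 2`, then `sπs` is a conjugate of
the involution `π`, hence an involution with as many 2-cycles, and `L` grows by one. If `π` fixes
`a` and `b`, then `s` and `π` are disjoint, so `sπ` is an involution with one 2-cycle more than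
`π`, and its inversions are those of `π` together with `(a, b)`; again `L` grows by one.
-/

open Equiv Finset

section Involution

variable {M : Type*} [Monoid M] {s x : M}

lemma conj_mul_self_eq_one (hs : s * s = 1) (hx : x * x = 1) : s * x * s * (s * x * s) = 1 := by
  simp only [mul_assoc]
  rw [← mul_assoc s s, hs, one_mul, ← mul_assoc x x, hx, one_mul, hs]

lemma Commute.mul_mul_self_eq_one (h : Commute s x) (hs : s * s = 1) (hx : x * x = 1) :
    s * x * (s * x) = 1 := by
  rw [h.symm.mul_mul_mul_comm, hs, hx, one_mul]

end Involution

namespace Equiv.Perm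

variable {α : Type*} [DecidableEq α]

lemma disjoint_swap_of_apply_eq {a b : α} {π : Perm α} (ha : π a = a) (hb : π b = b) :
    (swap a b).Disjoint π := by
  intro x
  by_cases hx : x = a ∨ x = b
  · rcases hx with rfl | rfl
    exacts [Or.inr ha, Or.inr hb]
  · push Not at hx
    exact Or.inl (swap_apply_of_ne_of_ne hx.1 hx.2)

end Equiv.Perm

section Inversions

variable {n : ℕ}

def inversions (w : Perm (Fin n)) : Finset (Fin n × Fin n) :=
  univ.filter fun p => p.1 < p.2 ∧ w p.2 < w p.1

lemma invNum_eq_card_inversions (w : Perm (Fin n)) : invNum w = (inversions w).card := rfl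

lemma swap_apply_lt_swap_apply_iff {a b x y : Fin n} (hab : (a : ℕ) + 1 = b) :
    swap a b y < swap a b x ↔ (y < x ∧ ¬(y = a ∧ x = b)) ∨ (y = b ∧ x = a) := by
  simp only [swap_apply_def, Fin.lt_def, Fin.ext_iff]
  split_ifs <;> simp_all <;> omega

lemma inversions_swap_mul {a b : Fin n} (hab : (a : ℕ) + 1 = b) {π : Perm (Fin n)}
    (ha : π a = a) (hb : π b = b) :
    inversions (swap a b * π) = insert (a, b) (inversions π) := by
  have hlt : a < b := by rw [Fin.lt_def]; omega
  ext ⟨p, q⟩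
  simp only [inversions, mem_filter, mem_univ, true_and, mem_insert, Perm.mul_apply,
    swap_apply_lt_swap_apply_iff hab, Prod.mk.injEq]
  constructor
  · rintro ⟨hpq, ⟨hinv, -⟩ | ⟨hq, hp⟩⟩
    · exact Or.inr ⟨hpq, hinv⟩
    · exact Or.inl ⟨π.injective (hp.trans ha.symm), π.injective (hq.trans hb.symm)⟩
  · rintro (⟨rfl, rfl⟩ | ⟨hpq, hinv⟩)
    · exact ⟨hlt, Or.inr ⟨hb, ha⟩⟩
    · refine ⟨hpq, Or.inl ⟨hinv, ?_⟩⟩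
      rintro ⟨hq, hp⟩
      rw [π.injective (hq.trans ha.symm), π.injective (hp.trans hb.symm)] at hpq
      exact hpq.asymm hlt

lemma invNum_swap_mul {a b : Fin n} (hab : (a : ℕ) + 1 = b) {π : Perm (Fin n)}
    (ha : π a = a) (hb : π b = b) :
    invNum (swap a b * π) = invNum π + 1 := by
  rw [invNum_eq_card_inversions, inversions_swap_mul hab ha hb, card_insert_of_notMem,
    invNum_eq_card_inversions]
  simp only [inversions, mem_filter, mem_univ, true_and, ha, hb]
  exact fun h => h.1.asymm h.2

end Inversions

section TwoCycles

variable {n : ℕ}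

lemma numTwoCycles_eq_card_support_div_two (π : Perm (Fin n)) :
    numTwoCycles π = π.support.card / 2 := rfl

lemma numTwoCycles_swap_mul_mul_swap (a b : Fin n) (π : Perm (Fin n)) :
    numTwoCycles (swap a b * π * swap a b) = numTwoCycles π := by
  rw [numTwoCycles_eq_card_support_div_two, numTwoCycles_eq_card_support_div_two]
  nth_rw 2 [← swap_inv a b]
  rw [Perm.card_support_conj]

lemma numTwoCycles_swap_mul_of_disjoint {a b : Fin n} (hab : a ≠ b) {π : Perm (Fin n)}
    (h : (swap a b).Disjoint π) :
    numTwoCycles (swap a b * π) = numTwoCycles π + 1 := by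
  rw [numTwoCycles_eq_card_support_div_two, h.card_support_mul, Perm.card_support_swap hab,
    numTwoCycles_eq_card_support_div_two]
  omega

end TwoCycles

lemma sNat_eq_swap {n i : ℕ} (hi : i + 1 < n) :
    sNat n i = swap (⟨i, Nat.lt_of_succ_lt hi⟩ : Fin n) ⟨i + 1, hi⟩ :=
  dif_pos hi

/-- For every involution `π` of `S_n` and every `i`, `m(s_i)·π` is again an involution, and
`L(m(s_i)·π) ∈ {L(π), L(π)+1}`, where `L(σ) = (ℓ(σ) + (number of 2-cycles of σ))/2`. -/
theorem stmt6 (n i : ℕ) (hi : i + 1 < n) (π : Equiv.Perm (Fin n)) (hπ : π * π = 1) :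
    RS n i π * RS n i π = 1 ∧
    ((invNum (RS n i π) + numTwoCycles (RS n i π)) / 2 = (invNum π + numTwoCycles π) / 2 ∨
      (invNum (RS n i π) + numTwoCycles (RS n i π)) / 2 =
        (invNum π + numTwoCycles π) / 2 + 1) := by
  set a : Fin n := ⟨i, Nat.lt_of_succ_lt hi⟩
  set b : Fin n := ⟨i + 1, hi⟩
  have hab : (a : ℕ) + 1 = b := rfl
  have hne : a ≠ b := Fin.ne_of_val_ne (by omega)
  unfold RS
  rw [sNat_eq_swap hi]
  split_ifs with hlen hfix
  · refine ⟨conj_mul_self_eq_one (swap_mul_self a b) hπ, Or.inr ?_⟩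
    rw [hlen, numTwoCycles_swap_mul_mul_swap]
    omega
  · have ha : π a = a := hfix a (Or.inl rfl)
    have hb : π b = b := hfix b (Or.inr rfl)
    have hdisj := Perm.disjoint_swap_of_apply_eq ha hb
    refine ⟨hdisj.commute.mul_mul_self_eq_one (swap_mul_self a b) hπ, Or.inr ?_⟩
    rw [invNum_swap_mul hab ha hb, numTwoCycles_swap_mul_of_disjoint hne hdisj]
    omega
  · exact ⟨hπ, Or.inl rfl⟩
end

section
/- For a fixed-point free involution π' = (a_1,b_1)...(a_k,b_k) of S_{2k} in standard form, the number of inversions of the word (a_1,b_1,a_2,b_2,...,a_k,b_k) equals L(π') − k, where L(π') = (ℓ(π')+k)/2. -/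
/-- The Richardson–Springer monoid action of `m(s_i)` on fixed-point free involutions:
`s_i π s_i` if `ℓ(s_i π s_i) = ℓ(π) + 2`, and `π` otherwise. -/
def RSfpf (n i : ℕ) (π : Equiv.Perm (Fin n)) : Equiv.Perm (Fin n) :=
  if invNum (sNat n i * π * sNat n i) = invNum π + 2 then sNat n i * π * sNat n i
  else π

/-- The word `(a_1, b_1, a_2, b_2, …, a_k, b_k)` of a fixed-point free involution in
standard form, as a function `Fin (2k) → Fin (2k)`. -/
def word (k : ℕ) (a b : Fin k → Fin (2 * k)) (j : Fin (2 * k)) : Fin (2 * k) :=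
  if (j : ℕ) % 2 = 0 then a ⟨(j : ℕ) / 2, by have := j.2; omega⟩
  else b ⟨(j : ℕ) / 2, by have := j.2; omega⟩

/-- The number of inversions of the word `(a_1, b_1, …, a_k, b_k)`. -/
def invWord (k : ℕ) (a b : Fin k → Fin (2 * k)) : ℕ :=
  (Finset.univ.filter fun p : Fin (2 * k) × Fin (2 * k) =>
    p.1 < p.2 ∧ word k a b p.2 < word k a b p.1).card

/-!
Write `w` for the word, read as a map from positions `0, …, 2k-1` to values, and `σ` for the
involution `2i ↔ 2i+1` of positions. Then `π ∘ w = w ∘ σ`, so `w` carries the inversions of `π`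
to the pairs of positions `(p, q)` with `w p < w q` and `w (σ q) < w (σ p)`. Since the `a i`
increase and `a i < b i`, an inversion `(p, q)` of the word has `p = 2i + 1` and `q` in a later
pair. Hence the pulled-back inversions of `π` are the `k` pairs `(2i, 2i+1)`, together with the
images of the word inversions under `σ × σ` and under `(p, q) ↦ (q, p)`, which gives
`ℓ(π) = k + 2 · invWord`.
-/

open Finset

lemma invNum_eq_card_filter_equiv {α : Type*} [Fintype α] {n : ℕ} (π : Equiv.Perm (Fin n))
    (e : α ≃ Fin n) :
    invNum π = #{pq : α × α | e pq.1 < e pq.2 ∧ π (e pq.2) < π (e pq.1)} :=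
  (card_equiv (e.prodCongr e) (by simp)).symm

namespace StandardWord

variable {k : ℕ}

def pairIndex (p : Fin (2 * k)) : Fin k := ⟨p / 2, by omega⟩

lemma pairIndex_lt_pairIndex_iff {p q : Fin (2 * k)} :
    pairIndex p < pairIndex q ↔ (p : ℕ) / 2 < q / 2 := Iff.rfl

lemma pairIndex_le_pairIndex_iff {p q : Fin (2 * k)} :
    pairIndex p ≤ pairIndex q ↔ (p : ℕ) / 2 ≤ q / 2 := Iff.rfl

lemma pairIndex_eq_pairIndex_iff {p q : Fin (2 * k)} :
    pairIndex p = pairIndex q ↔ (p : ℕ) / 2 = q / 2 := Fin.ext_iff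

lemma lt_of_pairIndex_lt {p q : Fin (2 * k)} (h : pairIndex p < pairIndex q) : p < q := by
  rw [pairIndex_lt_pairIndex_iff] at h
  rw [Fin.lt_def]
  omega

def pairPartner (p : Fin (2 * k)) : Fin (2 * k) :=
  ⟨if (p : ℕ) % 2 = 0 then p + 1 else p - 1, by split <;> omega⟩

lemma pairPartner_involutive : Function.Involutive (pairPartner (k := k)) := by
  intro p
  ext
  simp only [pairPartner]
  split_ifs <;> omega

def pairSwap : Equiv.Perm (Fin (2 * k)) := pairPartner_involutive.toPerm

lemma val_pairSwap (p : Fin (2 * k)) :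
    (pairSwap p : ℕ) = if (p : ℕ) % 2 = 0 then (p : ℕ) + 1 else (p : ℕ) - 1 := rfl

@[simp]
lemma pairSwap_pairSwap (p : Fin (2 * k)) : pairSwap (pairSwap p) = p :=
  pairPartner_involutive p

@[simp]
lemma pairIndex_pairSwap (p : Fin (2 * k)) : pairIndex (pairSwap p) = pairIndex p := by
  rw [pairIndex_eq_pairIndex_iff, val_pairSwap]
  split <;> omega

@[simp]
lemma pairSwap_symm : (pairSwap : Equiv.Perm (Fin (2 * k))).symm = pairSwap :=
  pairPartner_involutive.toPerm_symm

variable {a b : Fin k → Fin (2 * k)}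

lemma word_of_even {p : Fin (2 * k)} (hp : (p : ℕ) % 2 = 0) :
    word k a b p = a (pairIndex p) :=
  if_pos hp

lemma word_of_odd {p : Fin (2 * k)} (hp : (p : ℕ) % 2 = 1) :
    word k a b p = b (pairIndex p) :=
  if_neg (by omega)

lemma apply_word {π : Equiv.Perm (Fin (2 * k))} (hpair : ∀ i, π (a i) = b i)
    (hpair' : ∀ i, π (b i) = a i) (p : Fin (2 * k)) :
    π (word k a b p) = word k a b (pairSwap p) := by
  rcases Nat.mod_two_eq_zero_or_one p with hp | hp
  · rw [word_of_even hp, hpair, word_of_odd, pairIndex_pairSwap]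
    rw [val_pairSwap, if_pos hp]
    omega
  · rw [word_of_odd hp, hpair', word_of_even, pairIndex_pairSwap]
    rw [val_pairSwap, if_neg (by omega)]
    omega

variable (k a b)

def wordInversions : Finset (Fin (2 * k) × Fin (2 * k)) :=
  {pq | pq.1 < pq.2 ∧ word k a b pq.2 < word k a b pq.1}

def pulledInversions : Finset (Fin (2 * k) × Fin (2 * k)) :=
  {pq | word k a b pq.1 < word k a b pq.2 ∧
    word k a b (pairSwap pq.2) < word k a b (pairSwap pq.1)}

def pairPositions : Finset (Fin (2 * k) × Fin (2 * k)) :=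
  univ.image fun i : Fin k => (⟨2 * i, by omega⟩, ⟨2 * i + 1, by omega⟩)

variable {k a b}

lemma card_wordInversions : #(wordInversions k a b) = invWord k a b := rfl

lemma card_pairPositions : #(pairPositions k) = k := by
  rw [pairPositions, card_image_of_injective, card_univ, Fintype.card_fin]
  intro i j h
  simp only [Prod.mk.injEq, Fin.mk.injEq] at h
  exact Fin.ext (by omega)

lemma mem_pairPositions_iff {pq : Fin (2 * k) × Fin (2 * k)} :
    pq ∈ pairPositions k ↔ (pq.1 : ℕ) % 2 = 0 ∧ pq.2 = pairSwap pq.1 := by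
  constructor
  · intro h
    obtain ⟨i, -, rfl⟩ := mem_image.mp h
    refine ⟨by dsimp only; omega, Fin.ext ?_⟩
    rw [val_pairSwap]
    dsimp only
    split <;> omega
  · rintro ⟨hp, hq⟩
    refine mem_image.mpr ⟨pairIndex pq.1, mem_univ _, Prod.ext (Fin.ext ?_) (Fin.ext ?_)⟩
    · simp only [pairIndex]
      omega
    · rw [hq, val_pairSwap, if_pos hp]
      simp only [pairIndex]
      omega

section Order

variable (hab : ∀ i, a i < b i) (hmono : StrictMono a)
include hab hmono

lemma word_lt_of_even {p q : Fin (2 * k)} (hp : (p : ℕ) % 2 = 0)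
    (hpq : pairIndex p ≤ pairIndex q) (hne : p ≠ q) : word k a b p < word k a b q := by
  rw [word_of_even hp]
  rcases Nat.mod_two_eq_zero_or_one q with hq | hq
  · rw [word_of_even hq]
    apply hmono
    rw [pairIndex_lt_pairIndex_iff]
    rw [pairIndex_le_pairIndex_iff] at hpq
    omega
  · rw [word_of_odd hq]
    exact (hmono.monotone hpq).trans_lt (hab _)

lemma odd_and_pairIndex_lt_of_inversion {p q : Fin (2 * k)} (hpq : p < q)
    (hw : word k a b q < word k a b p) : (p : ℕ) % 2 = 1 ∧ pairIndex p < pairIndex q := by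
  have hp : (p : ℕ) % 2 = 1 := by
    by_contra hp
    refine hw.not_gt (word_lt_of_even hab hmono (by omega) ?_ hpq.ne)
    rw [pairIndex_le_pairIndex_iff]
    omega
  refine ⟨hp, ?_⟩
  rw [pairIndex_lt_pairIndex_iff]
  omega

lemma word_pairSwap_lt_of_inversion {p q : Fin (2 * k)} (hpq : p < q)
    (hw : word k a b q < word k a b p) :
    word k a b (pairSwap p) < word k a b (pairSwap q) := by
  obtain ⟨hp, hlt⟩ := odd_and_pairIndex_lt_of_inversion hab hmono hpq hw
  refine word_lt_of_even hab hmono ?_ (by simpa using hlt.le) ?_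
  · rw [val_pairSwap, if_neg (by omega)]
    omega
  · exact fun h => hlt.ne (by simpa using congrArg pairIndex h)

lemma word_injective {π : Equiv.Perm (Fin (2 * k))}
    (hπw : ∀ p, π (word k a b p) = word k a b (pairSwap p)) :
    Function.Injective (word k a b) := by
  intro p q hpq
  by_contra hne
  wlog hle : pairIndex p ≤ pairIndex q generalizing p q
  · exact this hpq.symm (Ne.symm hne) (le_of_not_ge hle)
  rcases Nat.mod_two_eq_zero_or_one p with hp | hp
  · exact (word_lt_of_even hab hmono hp hle hne).ne hpq
  · have hswap : word k a b (pairSwap p) = word k a b (pairSwap q) := by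
      rw [← hπw, ← hπw, hpq]
    refine (word_lt_of_even hab hmono ?_ (by simpa using hle) (pairSwap.injective.ne hne)).ne
      hswap
    rw [val_pairSwap, if_neg (by omega)]
    omega

lemma pairIndex_lt_of_mem_wordInversions {pq : Fin (2 * k) × Fin (2 * k)}
    (h : pq ∈ wordInversions k a b) : pairIndex pq.1 < pairIndex pq.2 := by
  rw [wordInversions, mem_filter] at h
  exact (odd_and_pairIndex_lt_of_inversion hab hmono h.2.1 h.2.2).2

lemma pulledInversions_eq :
    pulledInversions k a b = pairPositions k ∪
      (wordInversions k a b).map (pairSwap.prodCongr pairSwap).toEmbedding ∪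
      (wordInversions k a b).map (Equiv.prodComm _ _).toEmbedding := by
  ext ⟨p, q⟩
  simp only [pulledInversions, wordInversions, mem_union, mem_filter, mem_univ, true_and,
    mem_map_equiv, Equiv.prodCongr_symm, pairSwap_symm, Equiv.prodCongr_apply, Prod.map,
    Equiv.prodComm_symm, Equiv.prodComm_apply, Prod.swap, mem_pairPositions_iff]
  constructor
  · rintro ⟨h1, h2⟩
    rcases lt_trichotomy (pairIndex p) (pairIndex q) with hlt | heq | hgt
    · exact .inl (.inr ⟨lt_of_pairIndex_lt (by simpa using hlt), h2⟩)
    · have hne : (p : ℕ) ≠ q := fun h => h1.ne (congrArg _ (Fin.ext h))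
      rw [pairIndex_eq_pairIndex_iff] at heq
      have hp : (p : ℕ) % 2 = 0 := by
        by_contra hp
        refine h1.not_gt ?_
        rw [word_of_even (p := q) (by omega), word_of_odd (by omega),
          pairIndex_eq_pairIndex_iff.mpr heq]
        exact hab _
      refine .inl (.inl ⟨hp, Fin.ext ?_⟩)
      rw [val_pairSwap, if_pos hp]
      omega
    · exact .inr ⟨lt_of_pairIndex_lt hgt, h1⟩
  · rintro ((⟨hp, rfl⟩ | ⟨hlt, hw⟩) | ⟨hlt, hw⟩)
    · have hσp : (pairSwap p : ℕ) % 2 = 1 := by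
        rw [val_pairSwap, if_pos hp]
        omega
      rw [pairSwap_pairSwap, word_of_even hp, word_of_odd hσp, pairIndex_pairSwap]
      exact ⟨hab _, hab _⟩
    · exact ⟨by simpa using word_pairSwap_lt_of_inversion hab hmono hlt hw, hw⟩
    · exact ⟨hw, word_pairSwap_lt_of_inversion hab hmono hlt hw⟩

lemma card_pulledInversions : #(pulledInversions k a b) = k + 2 * invWord k a b := by
  have hlt : ∀ pq ∈ wordInversions k a b, pairIndex pq.1 < pairIndex pq.2 :=
    fun _ => pairIndex_lt_of_mem_wordInversions hab hmono
  rw [pulledInversions_eq hab hmono, card_union_of_disjoint, card_union_of_disjoint,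
    card_pairPositions, card_map, card_map, card_wordInversions]
  · ring
  · refine disjoint_left.mpr fun pq hF hσ => ?_
    rw [mem_pairPositions_iff] at hF
    have := hlt _ (mem_map_equiv.mp hσ)
    simp [hF.2] at this
  · refine disjoint_left.mpr fun pq hFσ hswap => ?_
    have hgt := hlt _ (mem_map_equiv.mp hswap)
    rcases mem_union.mp hFσ with hF | hσ
    · rw [mem_pairPositions_iff] at hF
      simp [hF.2] at hgt
    · have := hlt _ (mem_map_equiv.mp hσ)
      simp at hgt this
      exact hgt.asymm this

end Order

lemma invNum_eq_card_pulledInversions {π : Equiv.Perm (Fin (2 * k))} (hab : ∀ i, a i < b i)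
    (hmono : StrictMono a) (hpair : ∀ i, π (a i) = b i) (hpair' : ∀ i, π (b i) = a i) :
    invNum π = #(pulledInversions k a b) := by
  have hπw := apply_word hpair hpair'
  rw [invNum_eq_card_filter_equiv π
    (Equiv.ofBijective _ (word_injective hab hmono hπw).bijective_of_finite)]
  simp only [Equiv.ofBijective_apply, hπw, pulledInversions]

end StandardWord

theorem stmt11_general (k : ℕ) (π : Equiv.Perm (Fin (2 * k))) (a b : Fin k → Fin (2 * k))
    (hπ : π * π = 1) (hab : ∀ i, a i < b i)
    (hmono : StrictMono a) (hpair : ∀ i, π (a i) = b i) :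
    invWord k a b = (invNum π + k) / 2 - k := by
  have hpair' (i : Fin k) : π (b i) = a i := by
    rw [← hpair, ← Equiv.Perm.mul_apply, hπ, Equiv.Perm.one_apply]
  rw [StandardWord.invNum_eq_card_pulledInversions hab hmono hpair hpair',
    StandardWord.card_pulledInversions hab hmono]
  omega

/-- For a fixed-point free involution `π' = (a_1,b_1)⋯(a_k,b_k)` of `S_{2k}` in standard
form (so `a i < b i`, `a` strictly increasing, `π'(a i) = b i`), the number of inversions of
the word `(a_1,b_1,…,a_k,b_k)` equals `L(π') − k`, where `L(π') = (ℓ(π') + k)/2`. -/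
theorem stmt11 (k : ℕ) (π : Equiv.Perm (Fin (2 * k))) (a b : Fin k → Fin (2 * k))
    (hπ : π * π = 1) (hfpf : ∀ x, π x ≠ x) (hab : ∀ i, a i < b i)
    (hmono : StrictMono a) (hpair : ∀ i, π (a i) = b i) :
    invWord k a b = (invNum π + k) / 2 - k :=
  stmt11_general k π a b hπ hab hmono hpair
end

section
/- The permutation w = [a_1, b_1, a_2, b_2, ..., a_k, b_k] (in one-line notation) always lies in the W-set of the fixed-point free involution π' = (a_1,b_1)...(a_k,b_k) written in standard form; that is, m(w)·α' = π' and ℓ(w) = L'(π'), where α' = (1,2)(3,4)···(2k−1,2k). -/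
/-- The fixed-point free involution `α' = (1,2)(3,4)⋯(2k−1,2k)` of `S_{2k}`
(0-indexed: it swaps `2m` and `2m+1` for each `m`). -/
def alpha (k : ℕ) : Equiv.Perm (Fin (2 * k)) :=
  Function.Involutive.toPerm
    (fun x => ⟨2 * ((x : ℕ) / 2) + (1 - (x : ℕ) % 2), by have := x.2; omega⟩)
    (by intro x; apply Fin.ext; simp only [Fin.val_mk]; omega)

/-! Writing `w` for the word `[a₁, b₁, …, a_k, b_k]`, we have `π' = w α' w⁻¹`. If `w ≠ 1` it has a
left descent `s_i`: the letter `i + 1` comes before `i`. Then `s_i w` is again the word of a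
standard form with one inversion fewer, and `i + 1` must stand in an odd position, which forces
`π'(i + 1) < π'(i)` with `i, i + 1` not paired; so conjugation by `s_i` lowers `ℓ(π')` by exactly
two and `m(s_i)` undoes it. Induction on `ℓ(w)` ends at `w = 1`, `π' = α'`. -/

open Equiv

section Swap

variable {n : ℕ} {c d : Fin n}

lemma swap_lt_swap_iff (hcd : (d : ℕ) = c + 1) {x y : Fin n} (h : ¬(x = c ∧ y = d))
    (h' : ¬(x = d ∧ y = c)) : swap c d x < swap c d y ↔ x < y := by
  rw [Fin.lt_def, Fin.lt_def, swap_apply_def, swap_apply_def]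
  split_ifs <;> simp only [Fin.ext_iff] at * <;> omega

lemma invNum_one : invNum (1 : Perm (Fin n)) = 0 := by
  simp only [invNum, Perm.one_apply]
  exact Finset.card_eq_zero.2 (Finset.filter_false_of_mem fun p _ h => lt_asymm h.1 h.2)

lemma invNum_inv (u : Perm (Fin n)) : invNum u⁻¹ = invNum u := by
  apply Finset.card_bij' (fun r _ => (u⁻¹ r.2, u⁻¹ r.1)) (fun r _ => (u r.2, u r.1)) <;>
    simp +contextual

lemma invNum_mul_swap_add_one (hcd : (d : ℕ) = c + 1) (u : Perm (Fin n)) (h : u d < u c) :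
    invNum (u * swap c d) + 1 = invNum u := by
  have hcd' : c < d := Fin.lt_def.2 (by omega)
  have key : ((Finset.univ.filter fun p : Fin n × Fin n =>
        p.1 < p.2 ∧ (u * swap c d) p.2 < (u * swap c d) p.1).map
        (prodCongr (swap c d) (swap c d)).toEmbedding) =
      (Finset.univ.filter fun p : Fin n × Fin n => p.1 < p.2 ∧ u p.2 < u p.1).erase (c, d) := by
    ext ⟨x, y⟩
    simp only [Finset.mem_map_equiv, Finset.mem_erase, Finset.mem_filter, Finset.mem_univ,
      true_and]
    simp only [prodCongr_symm, symm_swap, prodCongr_apply, Prod.map_apply, Perm.mul_apply,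
      swap_apply_self, ne_eq, Prod.mk.injEq]
    have hdc (hu : u y < u x) : ¬(x = d ∧ y = c) := by
      rintro ⟨rfl, rfl⟩
      exact lt_asymm h hu
    constructor
    · rintro ⟨hlt, hu⟩
      have hcd_ne : ¬(x = c ∧ y = d) := by
        rintro ⟨rfl, rfl⟩
        rw [swap_apply_left, swap_apply_right] at hlt
        exact lt_asymm hlt hcd'
      exact ⟨hcd_ne, (swap_lt_swap_iff hcd hcd_ne (hdc hu)).1 hlt, hu⟩
    · rintro ⟨hcd_ne, hxy, hu⟩
      exact ⟨(swap_lt_swap_iff hcd hcd_ne (hdc hu)).2 hxy, hu⟩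
  rw [invNum, invNum, ← Finset.card_map, key, Finset.card_erase_add_one]
  simpa using ⟨hcd', h⟩

lemma invNum_swap_mul_add_one (hcd : (d : ℕ) = c + 1) (u : Perm (Fin n)) (h : u⁻¹ d < u⁻¹ c) :
    invNum (swap c d * u) + 1 = invNum u := by
  rw [← invNum_inv, mul_inv_rev, swap_inv, ← invNum_inv u]
  exact invNum_mul_swap_add_one hcd _ h

lemma invNum_swap_mul_swap_add_two (hcd : (d : ℕ) = c + 1) (σ : Perm (Fin n)) (hσ : σ⁻¹ = σ)
    (h : σ d < σ c) (hc : σ c ≠ d) : invNum (swap c d * σ * swap c d) + 2 = invNum σ := by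
  have h₁ := invNum_mul_swap_add_one hcd σ h
  have h₂ : invNum (swap c d * (σ * swap c d)) + 1 = invNum (σ * swap c d) := by
    refine invNum_swap_mul_add_one hcd _ ?_
    simp only [mul_inv_rev, swap_inv, hσ, Perm.mul_apply]
    refine (swap_lt_swap_iff hcd (fun h' => hc h'.2) fun h' => ?_).2 h
    exact absurd h (by rw [h'.1, h'.2]; exact (Fin.lt_def.2 (by omega)).not_gt)
  rw [mul_assoc]
  omega

end Swap

lemma sNat_of_lt {n i : ℕ} (hi : i + 1 < n) : sNat n i = swap ⟨i, by omega⟩ ⟨i + 1, hi⟩ :=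
  dif_pos hi

lemma sNat_mul_self (n i : ℕ) : sNat n i * sNat n i = 1 := by
  unfold sNat
  split_ifs
  exacts [swap_mul_self _ _, one_mul 1]

lemma RSfpf_sNat_conj {n i : ℕ} (σ : Perm (Fin n))
    (h : invNum (sNat n i * σ * sNat n i) + 2 = invNum σ) :
    RSfpf n i (sNat n i * σ * sNat n i) = σ := by
  have hσ : sNat n i * (sNat n i * σ * sNat n i) * sNat n i = σ := by
    simp only [mul_assoc, sNat_mul_self, mul_one, ← mul_assoc (sNat n i) (sNat n i), one_mul]
  rw [RSfpf, hσ, if_pos h.symm]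

lemma Equiv.Perm.exists_inv_succ_lt_of_ne_one {n : ℕ} {u : Perm (Fin n)} (hu : u ≠ 1) :
    ∃ i, ∃ hi : i + 1 < n, u⁻¹ ⟨i + 1, hi⟩ < u⁻¹ ⟨i, by omega⟩ := by
  contrapose! hu
  cases n with
  | zero => exact Subsingleton.elim _ _
  | succ n =>
    have hmono : StrictMono ⇑u⁻¹ := Fin.strictMono_iff_lt_succ.2 fun j =>
      (hu j j.succ.isLt).lt_of_ne (u⁻¹.injective.ne Fin.castSucc_lt_succ.ne)
    exact inv_eq_one.1 (Perm.ext fun x => hmono.apply_eq)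

/-- `w` is the one-line word `[a₁, b₁, …, a_k, b_k]` of a fixed-point free involution in standard
form exactly when every letter at an even (0-indexed) position is smaller than all later letters. -/
def IsStandardWord {n : ℕ} (w : Perm (Fin n)) : Prop :=
  ∀ x y : Fin n, (x : ℕ) % 2 = 0 → x < y → w x < w y

lemma IsStandardWord.swap_mul {n : ℕ} {w : Perm (Fin n)} (hw : IsStandardWord w) {c d : Fin n}
    (hcd : (d : ℕ) = c + 1) (h : w⁻¹ d < w⁻¹ c) : IsStandardWord (swap c d * w) := by
  intro x y hx hxy
  refine (swap_lt_swap_iff hcd (fun hxy' => ?_) fun hxy' => ?_).2 (hw x y hx hxy)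
  · rw [← hxy'.1, ← hxy'.2, Perm.coe_inv, symm_apply_apply, symm_apply_apply] at h
    exact lt_asymm h hxy
  · exact lt_asymm (hw x y hx hxy) (by rw [hxy'.1, hxy'.2]; exact Fin.lt_def.2 (by omega))

lemma alpha_val (k : ℕ) (x : Fin (2 * k)) : (alpha k x : ℕ) = 2 * (x / 2) + (1 - x % 2) := rfl

lemma alpha_inv (k : ℕ) : (alpha k)⁻¹ = alpha k :=
  Function.Involutive.toPerm_symm _

lemma IsStandardWord.invNum_conj_alpha {k : ℕ} {w : Perm (Fin (2 * k))} (hw : IsStandardWord w)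
    {c d : Fin (2 * k)} (hcd : (d : ℕ) = c + 1) (h : w⁻¹ d < w⁻¹ c) :
    invNum (swap c d * (w * alpha k * w⁻¹) * swap c d) + 2 = invNum (w * alpha k * w⁻¹) := by
  set p := w⁻¹ d
  set q := w⁻¹ c
  -- `d` comes before the smaller letter `c`, so its position `p` is odd: `α p < p < α q`
  have hp : (p : ℕ) % 2 = 1 := by
    by_contra hp
    have hdc : d < c := by simpa [p, q] using hw p q (by omega) h
    exact absurd hdc (Fin.lt_def.2 (by omega)).not_gt
  have hpq := Fin.lt_def.1 h
  apply invNum_swap_mul_swap_add_two hcd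
  · rw [mul_inv_rev, mul_inv_rev, inv_inv, alpha_inv, mul_assoc]
  · exact hw _ _ (by rw [alpha_val]; omega) (Fin.lt_def.2 (by rw [alpha_val, alpha_val]; omega))
  · intro hc
    rw [Perm.mul_apply, Perm.mul_apply, ← apply_symm_apply w d, ← Perm.coe_inv,
      w.injective.eq_iff] at hc
    have := congrArg Fin.val hc
    rw [alpha_val] at this
    omega

theorem IsStandardWord.exists_reduced_word {k : ℕ} {w : Perm (Fin (2 * k))}
    (hw : IsStandardWord w) :
    ∃ l : List ℕ, (l.map (sNat (2 * k))).prod = w ∧ l.length = invNum w ∧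
      l.foldr (RSfpf (2 * k)) (alpha k) = w * alpha k * w⁻¹ := by
  induction hN : invNum w using Nat.strong_induction_on generalizing w with
  | _ N ih =>
  by_cases h1 : w = 1
  · subst h1
    exact ⟨[], by simp, by simp [← hN, invNum_one], by simp⟩
  obtain ⟨i, hi, hdesc⟩ := Perm.exists_inv_succ_lt_of_ne_one h1
  have hlen := invNum_swap_mul_add_one rfl w hdesc
  obtain ⟨l, hprod, hlength, hfold⟩ :=
    ih _ (by omega) (hw.swap_mul rfl hdesc) rfl
  rw [← sNat_of_lt hi] at hprod hlength hfold hlen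
  refine ⟨i :: l, ?_, ?_, ?_⟩
  · rw [List.map_cons, List.prod_cons, hprod, ← mul_assoc, sNat_mul_self, one_mul]
  · rw [List.length_cons, hlength]
    omega
  · have hs : (sNat (2 * k) i)⁻¹ = sNat (2 * k) i := inv_eq_of_mul_eq_one_right (sNat_mul_self ..)
    have hconj : sNat (2 * k) i * w * alpha k * (sNat (2 * k) i * w)⁻¹ =
        sNat (2 * k) i * (w * alpha k * w⁻¹) * sNat (2 * k) i := by
      simp only [mul_inv_rev, hs, mul_assoc]
    rw [List.foldr_cons, hfold, hconj]
    refine RSfpf_sNat_conj _ ?_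
    rw [sNat_of_lt hi]
    exact hw.invNum_conj_alpha rfl hdesc

section StandardForm

variable {k : ℕ} {a b : Fin k → Fin (2 * k)}

lemma word_of_even {x : Fin (2 * k)} (hx : (x : ℕ) % 2 = 0) :
    word k a b x = a ⟨x / 2, by omega⟩ :=
  if_pos hx

lemma word_of_odd {x : Fin (2 * k)} (hx : (x : ℕ) % 2 = 1) :
    word k a b x = b ⟨x / 2, by omega⟩ :=
  if_neg (by omega)

lemma isStandardWord_of_word (hab : ∀ i, a i < b i) (hmono : StrictMono a)
    {w : Perm (Fin (2 * k))} (hw : ∀ j, w j = word k a b j) : IsStandardWord w := by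
  intro x y hx hxy
  have hxy' := Fin.lt_def.1 hxy
  rw [hw, hw, word_of_even hx]
  rcases Nat.mod_two_eq_zero_or_one y with hy | hy
  · rw [word_of_even hy]
    exact hmono (Fin.mk_lt_mk.2 (by omega))
  · rw [word_of_odd hy]
    exact (hmono.monotone (Fin.mk_le_mk.2 (by omega))).trans_lt (hab _)

lemma eq_conj_alpha_of_word {π : Perm (Fin (2 * k))} (hπ : π * π = 1)
    (hpair : ∀ i, π (a i) = b i) {w : Perm (Fin (2 * k))} (hw : ∀ j, w j = word k a b j) :
    π = w * alpha k * w⁻¹ := by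
  rw [eq_mul_inv_iff_mul_eq]
  ext1 x
  simp only [Perm.mul_apply, hw]
  rcases Nat.mod_two_eq_zero_or_one x with hx | hx
  · rw [word_of_even hx, word_of_odd (by rw [alpha_val]; omega), hpair]
    congr 2
    rw [alpha_val]
    omega
  · rw [word_of_odd hx, word_of_even (by rw [alpha_val]; omega), ← hpair, ← Perm.mul_apply, hπ,
      Perm.one_apply]
    congr 2
    rw [alpha_val]
    omega

end StandardForm

theorem stmt13_general (k : ℕ) (π : Equiv.Perm (Fin (2 * k))) (a b : Fin k → Fin (2 * k))
    (hπ : π * π = 1) (hab : ∀ i, a i < b i)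
    (hmono : StrictMono a) (hpair : ∀ i, π (a i) = b i)
    (w : Equiv.Perm (Fin (2 * k))) (hw : ∀ j, w j = word k a b j) :
    invNum w = invWord k a b ∧
    ∃ l : List ℕ, (l.map (sNat (2 * k))).prod = w ∧ l.length = invNum w ∧
      l.foldr (RSfpf (2 * k)) (alpha k) = π := by
  refine ⟨by simp only [invNum, invWord, hw], ?_⟩
  rw [eq_conj_alpha_of_word hπ hpair hw]
  exact (isStandardWord_of_word hab hmono hw).exists_reduced_word

/-- The permutation `w = [a_1, b_1, a_2, b_2, …, a_k, b_k]` (one-line notation) always lies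
in the W-set of the fixed-point free involution `π' = (a_1,b_1)⋯(a_k,b_k)` in standard
form: `ℓ(w) = L'(π')` and `m(w)·α' = π'` via some reduced word of `w`. -/
theorem stmt13 (k : ℕ) (π : Equiv.Perm (Fin (2 * k))) (a b : Fin k → Fin (2 * k))
    (hπ : π * π = 1) (hfpf : ∀ x, π x ≠ x) (hab : ∀ i, a i < b i)
    (hmono : StrictMono a) (hpair : ∀ i, π (a i) = b i)
    (w : Equiv.Perm (Fin (2 * k))) (hw : ∀ j, w j = word k a b j) :
    invNum w = invWord k a b ∧
    ∃ l : List ℕ, (l.map (sNat (2 * k))).prod = w ∧ l.length = invNum w ∧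
      l.foldr (RSfpf (2 * k)) (alpha k) = π :=
  stmt13_general k π a b hπ hab hmono hpair w hw
end
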